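/- Suppose B is uniform, i.e., each B(v) is either an interval {c(v), c(v)+1, …, d(v)} or a parity class {c(v), c(v)+2, …, d(v)} with d(v)−c(v) even. Construct the multigraph G' from G by adding, at every vertex v whose B(v) is a parity class and not an interval, exactly (d(v)−c(v))/2 loops of weight 0 (each loop contributing 2 to the degree of v), keeping all original edges and their weights; set a(v) = b(v) = d(v) for such vertices v, and a(v) = c(v), b(v) = d(v) for vertices whose B(v) is an interval. Then the map sending an (a,b)-matching F' of G' to F' ∩ E is a one-to-one correspondence between (a,b)-matchings of G' and B-matchings of G that preserves weight; consequently, a maximum-weight (a,b)-matching of G' yields a maximum-weight B-matching of G. -/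
import Mathlib


open Finset

variable {V : Type*} [Fintype V] [DecidableEq V]

/-- The number of edges of `F` incident to `v`. -/
def degOn (F : Finset (Sym2 V)) (v : V) : ℕ := (F.filter (fun e => v ∈ e)).card

/-- The total weight of an edge set. -/
def weightOf (w : Sym2 V → ℝ) (F : Finset (Sym2 V)) : ℝ := ∑ e ∈ F, w e

/-- `F` is a `B`-matching of `G`. -/
def IsBMatching (G : SimpleGraph V) [DecidableRel G.Adj] (B : V → Finset ℕ)
    (F : Finset (Sym2 V)) : Prop :=
  F ⊆ G.edgeFinset ∧ ∀ v, degOn F v ∈ B v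

/-- An edge subset of the multigraph `G'` obtained from `G` by adding `numLoops v` weight-`0`
loops at each vertex `v` is modelled by a pair `(F, ℓ)`: the subset `F ⊆ E` of original edges
together with the number `ℓ v ≤ numLoops v` of loops selected at each vertex `v` (parallel
loops being indistinguishable).  Each loop at `v` contributes `2` to the degree of `v`.
`(F, ℓ)` is an `(a,b)`-matching of `G'`. -/
def IsABMatching (G : SimpleGraph V) [DecidableRel G.Adj] (numLoops a b : V → ℕ)
    (F : Finset (Sym2 V)) (ℓ : V → ℕ) : Prop :=
  F ⊆ G.edgeFinset ∧ (∀ v, ℓ v ≤ numLoops v) ∧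
    ∀ v, a v ≤ degOn F v + 2 * ℓ v ∧ degOn F v + 2 * ℓ v ≤ b v

/-- The weight of an edge subset `(F, ℓ)` of `G'`: original edges keep their weight and
every loop has weight `0`. -/
def abWeight (w : Sym2 V → ℝ) (F : Finset (Sym2 V)) (ℓ : V → ℕ) : ℝ :=
  weightOf w F + ∑ v, (ℓ v : ℝ) * 0

theorem uniform_BMatching_ab_reduction
    (G : SimpleGraph V) [DecidableRel G.Adj] (B : V → Finset ℕ) (w : Sym2 V → ℝ)
    (c d : V → ℕ) (hcd : ∀ v, c v ≤ d v)
    (hB : ∀ v, ∀ k ∈ B v, k ≤ G.degree v)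
    -- `B` is uniform: each `B v` is an interval `{c v, …, d v}` or a parity class
    -- `{c v, c v + 2, …, d v}` with `d v − c v` even
    (huniform : ∀ v, B v = Finset.Icc (c v) (d v) ∨
      ((d v - c v) % 2 = 0 ∧
        B v = (Finset.Icc (c v) (d v)).filter (fun m => m % 2 = c v % 2)))
    (numLoops a b : V → ℕ)
    -- at each vertex whose `B v` is a parity class and not an interval we add
    -- `(d v − c v)/2` loops
    (hloops : ∀ v, numLoops v =
      if B v = Finset.Icc (c v) (d v) then 0 else (d v - c v) / 2)
    (ha : ∀ v, a v = if B v = Finset.Icc (c v) (d v) then c v else d v)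
    (hb : ∀ v, b v = d v) :
    -- the map `(F, ℓ) ↦ F = F' ∩ E` sends `(a,b)`-matchings of `G'` to `B`-matchings of `G`
    -- and preserves weight
    (∀ F ℓ, IsABMatching G numLoops a b F ℓ →
        IsBMatching G B F ∧ abWeight w F ℓ = weightOf w F) ∧
    -- it is a one-to-one correspondence: every `B`-matching of `G` has exactly one preimage
    (∀ F, IsBMatching G B F → ∃! ℓ : V → ℕ, IsABMatching G numLoops a b F ℓ) ∧
    -- a maximum-weight `(a,b)`-matching of `G'` yields a maximum-weight `B`-matching of `G`
    (∀ F ℓ, IsABMatching G numLoops a b F ℓ →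
      (∀ F' ℓ', IsABMatching G numLoops a b F' ℓ' → abWeight w F' ℓ' ≤ abWeight w F ℓ) →
      IsBMatching G B F ∧ ∀ F', IsBMatching G B F' → weightOf w F' ≤ weightOf w F) := by
  have hpar : ∀ v, B v ≠ Finset.Icc (c v) (d v) →
      (d v - c v) % 2 = 0 ∧
        B v = (Finset.Icc (c v) (d v)).filter (fun m => m % 2 = c v % 2) := by
    intro v hv
    rcases huniform v with h | h
    · exact absurd h hv
    · exact h
  have hweq : ∀ F (ℓ : V → ℕ), abWeight w F ℓ = weightOf w F := by
    intro F ℓ; simp [abWeight]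
  have part1 : ∀ F ℓ, IsABMatching G numLoops a b F ℓ →
      IsBMatching G B F ∧ abWeight w F ℓ = weightOf w F := by
    rintro F ℓ ⟨hFE, hℓ, hab⟩
    refine ⟨⟨hFE, fun v => ?_⟩, hweq F ℓ⟩
    have hℓv := hℓ v
    have habv := hab v
    rw [hloops v] at hℓv
    rw [ha v, hb v] at habv
    by_cases hv : B v = Finset.Icc (c v) (d v)
    · rw [if_pos hv] at hℓv
      rw [if_pos hv] at habv
      rw [hv, Finset.mem_Icc]
      omega
    · obtain ⟨hpe, hBe⟩ := hpar v hv
      rw [if_neg hv] at hℓv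
      rw [if_neg hv] at habv
      rw [hBe, Finset.mem_filter, Finset.mem_Icc]
      have := hcd v
      omega
  have part2 : ∀ F, IsBMatching G B F → ∃! ℓ : V → ℕ,
      IsABMatching G numLoops a b F ℓ := by
    rintro F ⟨hFE, hF⟩
    refine ⟨fun v => if B v = Finset.Icc (c v) (d v) then 0
      else (d v - degOn F v) / 2, ⟨hFE, fun v => ?_, fun v => ?_⟩, ?_⟩
    · rw [hloops v]
      by_cases hv : B v = Finset.Icc (c v) (d v)
      · simp [hv]
      · obtain ⟨hpe, hBe⟩ := hpar v hv
        have hFv := hF v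
        rw [hBe, Finset.mem_filter, Finset.mem_Icc] at hFv
        simp only [if_neg hv]
        omega
    · rw [ha v, hb v]
      have hFv := hF v
      by_cases hv : B v = Finset.Icc (c v) (d v)
      · rw [hv, Finset.mem_Icc] at hFv
        simp only [if_pos hv]
        omega
      · obtain ⟨hpe, hBe⟩ := hpar v hv
        rw [hBe, Finset.mem_filter, Finset.mem_Icc] at hFv
        simp only [if_neg hv]
        omega
    · rintro ℓ' ⟨_, hℓ', hab'⟩
      funext v
      have hℓv := hℓ' v
      have habv := hab' v
      rw [hloops v] at hℓv
      rw [ha v, hb v] at habv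
      by_cases hv : B v = Finset.Icc (c v) (d v)
      · rw [if_pos hv] at hℓv
        simp [hv]
        omega
      · obtain ⟨hpe, hBe⟩ := hpar v hv
        have hFv := hF v
        rw [hBe, Finset.mem_filter, Finset.mem_Icc] at hFv
        rw [if_neg hv] at hℓv habv
        simp only [if_neg hv]
        omega
  refine ⟨part1, part2, ?_⟩
  intro F ℓ hFℓ hmax
  obtain ⟨hBF, _⟩ := part1 F ℓ hFℓ
  refine ⟨hBF, fun F' hF' => ?_⟩
  obtain ⟨ℓ', hℓ', _⟩ := part2 F' hF'
  have h := hmax F' ℓ' hℓ'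
  rw [hweq F ℓ, hweq F' ℓ'] at h
  exact h
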